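/- (Proposition 1, lower bound on the first spurious weight) Suppose 0 < v_j(0) < (1/2)·log(p/(1-p)) for every j. Fix T > 0 and set M = u(T). Then for all 0 < t < T, v_1(t) > (1/2)·log(p/(1-p)) + log tanh( artanh( √((1-p)/p) · e^{v_1(0)} ) + e^{-M} · 2^{D-1} · (p(1-p))^{D/2} · t ). -/

import Mathlib

/-!
With `c = ½ log (p / (1 - p))`, the substitution `z = exp (v₁ - c)` turns the equation for `v₁`
into the Riccati equation `z' = B (1 - z²)` with `B = e^{-u} √(p(1-p)) ∏_{i ≠ 1} g(vᵢ)`.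
Since `1 - z` solves a linear equation, uniqueness keeps `z < 1`, so `artanh z` is defined and
grows at rate `B`. By AM-GM each `g(vᵢ) ≥ 2 √(p(1-p))`, and `u` increases, so on `[0, t]`
`B ≥ e^{-u(t)} 2^{D-1} (p(1-p))^{D/2} > e^{-M} 2^{D-1} (p(1-p))^{D/2}`; applying `tanh` and
`log` to `artanh (z t) > artanh (z 0) + e^{-M} 2^{D-1} (p(1-p))^{D/2} t` gives the bound.
-/

noncomputable def artanh (x : ℝ) : ℝ := (1 / 2) * Real.log ((1 + x) / (1 - x))

open Set

theorem pos_of_hasDerivWithinAt_eq_mul {f c : ℝ → ℝ} {a : ℝ} (hc : ContinuousOn c (Ici a))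
    (hf : ∀ t ∈ Ici a, HasDerivWithinAt f (c t * f t) (Ici a) t) (ha : 0 < f a) :
    ∀ t ∈ Ici a, 0 < f t := by
  intro t ht
  -- At a zero `s` of `f`, uniqueness for `x' = c t x` run backwards from `s` forces `f a = 0`.
  by_contra! hft
  have hfc : ContinuousOn f (Ici a) := fun τ hτ ↦ (hf τ hτ).continuousWithinAt
  obtain ⟨s, hs, hfs⟩ : ∃ s ∈ Icc a t, f s = 0 :=
    intermediate_value_Icc' ht (hfc.mono Icc_subset_Ici_self) ⟨hft, ha.le⟩
  have hsub : Icc a s ⊆ Ici a := Icc_subset_Ici_self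
  obtain ⟨K, hK⟩ := isCompact_Icc.exists_bound_of_continuousOn (hc.mono hsub)
  have hzero : EqOn f (fun _ ↦ 0) (Icc a s) := by
    refine ODE_solution_unique_of_mem_Icc_left (v := fun τ x ↦ c τ * x) (s := fun _ ↦ univ)
      (K := K.toNNReal) (fun τ hτ ↦ ?_) (hfc.mono hsub) (fun τ hτ ↦ ?_) (fun _ _ ↦ mem_univ _)
      continuousOn_const (fun τ _ ↦ ?_) (fun _ _ ↦ mem_univ _) hfs
    · exact ((lipschitzWith_smul (c τ)).weaken
        (NNReal.le_toNNReal_of_coe_le (hK τ (Ioc_subset_Icc_self hτ)))).lipschitzOnWith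
    · exact (hf τ hτ.1.le).mono_of_mem_nhdsWithin
        (mem_nhdsWithin_of_mem_nhds (Ici_mem_nhds hτ.1))
    · simpa using hasDerivWithinAt_const τ (Iic τ) (0 : ℝ)
  exact ha.ne' (hzero ⟨le_rfl, hs.1⟩)

theorem lt_one_of_hasDerivWithinAt_mul_one_sub_sq {z B : ℝ → ℝ} {a : ℝ}
    (hB : ContinuousOn B (Ici a))
    (hz : ∀ t ∈ Ici a, HasDerivWithinAt z (B t * (1 - z t ^ 2)) (Ici a) t) (ha : z a < 1) :
    ∀ t ∈ Ici a, z t < 1 := by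
  have hzc : ContinuousOn z (Ici a) := fun t ht ↦ (hz t ht).continuousWithinAt
  refine fun t ht ↦ sub_pos.1 <| pos_of_hasDerivWithinAt_eq_mul (f := fun τ ↦ 1 - z τ) (a := a)
    (c := fun τ ↦ -(B τ * (1 + z τ)))
    (by fun_prop) (fun τ hτ ↦ ?_) (sub_pos.2 ha) t ht
  exact ((hz τ hτ).const_sub 1).congr_deriv (by ring)

theorem abs_lt_one_of_hasDerivWithinAt_mul_one_sub_sq {z B : ℝ → ℝ} {a : ℝ}
    (hB : ContinuousOn B (Ici a))
    (hz : ∀ t ∈ Ici a, HasDerivWithinAt z (B t * (1 - z t ^ 2)) (Ici a) t) (ha : |z a| < 1) :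
    ∀ t ∈ Ici a, |z t| < 1 := by
  have hneg : ∀ t ∈ Ici a, HasDerivWithinAt (-z) (-B t * (1 - (-z) t ^ 2)) (Ici a) t := by
    intro t ht
    exact (hz t ht).neg.congr_deriv (by simp only [Pi.neg_apply]; ring)
  intro t ht
  rw [abs_lt] at ha ⊢
  exact ⟨neg_lt.1 (lt_one_of_hasDerivWithinAt_mul_one_sub_sq hB.neg hneg (neg_lt.1 ha.1) t ht),
    lt_one_of_hasDerivWithinAt_mul_one_sub_sq hB hz ha.2 t ht⟩

theorem artanh_eq_real_artanh {x : ℝ} (hx : x ∈ Icc (-1) 1) : artanh x = Real.artanh x :=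
  (Real.artanh_eq_half_log hx).symm

theorem artanh_pos {x : ℝ} (hx : x ∈ Ioo 0 1) : 0 < artanh x := by
  rw [artanh_eq_real_artanh ⟨by linarith [hx.1], hx.2.le⟩]
  exact Real.artanh_pos hx

theorem hasDerivAt_artanh {x : ℝ} (hx : |x| < 1) : HasDerivAt artanh (1 - x ^ 2)⁻¹ x := by
  obtain ⟨hx₁, hx₂⟩ := abs_lt.1 hx
  have h₁ : 1 + x ≠ 0 := by linarith
  have h₂ : 1 - x ≠ 0 := by linarith
  have h₃ : 1 - x ^ 2 ≠ 0 := by nlinarith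
  have := (((hasDerivAt_id' x).const_add 1).div ((hasDerivAt_id' x).const_sub 1) h₂).log
    (div_ne_zero h₁ h₂) |>.const_mul (1 / 2)
  exact this.congr_deriv (by simp only [Pi.div_apply]; field_simp; ring)

theorem Real.tanh_strictMono : StrictMono Real.tanh := by
  intro x y hxy
  by_contra! h
  have := Real.artanh_le_artanh (Real.neg_one_lt_tanh y) (Real.tanh_lt_one x) h
  rw [Real.artanh_tanh, Real.artanh_tanh] at this
  exact hxy.not_ge this

theorem Real.tanh_pos {x : ℝ} (hx : 0 < x) : 0 < Real.tanh x :=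
  Real.tanh_zero ▸ Real.tanh_strictMono hx

theorem tanh_lt_of_lt_artanh {x y : ℝ} (hx : |x| < 1) (h : y < artanh x) : Real.tanh y < x := by
  obtain ⟨hx₁, hx₂⟩ := abs_lt.1 hx
  rw [artanh_eq_real_artanh ⟨hx₁.le, hx₂.le⟩] at h
  simpa [Real.tanh_artanh ⟨hx₁, hx₂⟩] using Real.tanh_strictMono h

theorem artanh_add_mul_le_artanh_of_hasDerivWithinAt {z B : ℝ → ℝ} {a b m : ℝ}
    (hB : ContinuousOn B (Ici a))
    (hz : ∀ t ∈ Ici a, HasDerivWithinAt z (B t * (1 - z t ^ 2)) (Ici a) t) (ha : |z a| < 1)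
    (hab : a ≤ b) (hm : ∀ t ∈ Icc a b, m ≤ B t) :
    artanh (z a) + m * (b - a) ≤ artanh (z b) := by
  have hz1 := abs_lt_one_of_hasDerivWithinAt_mul_one_sub_sq hB hz ha
  have hw : ∀ t ∈ Ici a, HasDerivWithinAt (fun τ ↦ artanh (z τ)) (B t) (Ici a) t := by
    intro t ht
    have hne : 1 - z t ^ 2 ≠ 0 := by nlinarith [abs_lt.1 (hz1 t ht)]
    exact ((hasDerivAt_artanh (hz1 t ht)).comp_hasDerivWithinAt t (hz t ht)).congr_deriv
      (by field_simp)
  have hw' : ∀ t ∈ interior (Icc a b), HasDerivAt (fun τ ↦ artanh (z τ)) (B t) t := by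
    rw [interior_Icc]
    exact fun t ht ↦ (hw t ht.1.le).hasDerivAt (Ici_mem_nhds ht.1)
  have := (convex_Icc a b).mul_sub_le_image_sub_of_le_deriv (C := m)
    (fun t ht ↦ (hw t ht.1).continuousWithinAt.mono Icc_subset_Ici_self)
    (fun t ht ↦ (hw' t ht).differentiableAt.differentiableWithinAt)
    (fun t ht ↦ (hw' t ht).deriv ▸ hm t (interior_subset ht))
    a (left_mem_Icc.2 hab) b (right_mem_Icc.2 hab) hab
  linarith

theorem tanh_artanh_add_mul_lt_of_hasDerivWithinAt {z B : ℝ → ℝ} {a b m K : ℝ}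
    (hB : ContinuousOn B (Ici a))
    (hz : ∀ t ∈ Ici a, HasDerivWithinAt z (B t * (1 - z t ^ 2)) (Ici a) t) (ha : |z a| < 1)
    (hab : a < b) (hm : ∀ t ∈ Icc a b, m ≤ B t) (hK : K < m) :
    Real.tanh (artanh (z a) + K * (b - a)) < z b := by
  refine tanh_lt_of_lt_artanh (abs_lt_one_of_hasDerivWithinAt_mul_one_sub_sq hB hz ha b hab.le) ?_
  have := artanh_add_mul_le_artanh_of_hasDerivWithinAt hB hz ha hab.le hm
  nlinarith

theorem two_sqrt_mul_le_mul_exp_neg_add_mul_exp {a b : ℝ} (ha : 0 ≤ a) (hb : 0 ≤ b) (v : ℝ) :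
    2 * √(a * b) ≤ a * Real.exp (-v) + b * Real.exp v := by
  have hx := Real.sq_sqrt (mul_nonneg ha (Real.exp_pos (-v)).le)
  have hy := Real.sq_sqrt (mul_nonneg hb (Real.exp_pos v).le)
  have hxy : √(a * Real.exp (-v)) * √(b * Real.exp v) = √(a * b) := by
    rw [← Real.sqrt_mul (mul_nonneg ha (Real.exp_pos (-v)).le), mul_mul_mul_comm, ← Real.exp_add,
      neg_add_cancel, Real.exp_zero, mul_one]
  nlinarith [sq_nonneg (√(a * Real.exp (-v)) - √(b * Real.exp v))]

theorem pow_le_prod_erase_mul_exp_neg_add_mul_exp {ι : Type*} [Fintype ι] [DecidableEq ι]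
    {a b : ℝ} (ha : 0 ≤ a) (hb : 0 ≤ b) (w : ι → ℝ) (j : ι) :
    (2 * √(a * b)) ^ (Fintype.card ι - 1) ≤
      ∏ i ∈ Finset.univ.erase j, (a * Real.exp (-w i) + b * Real.exp (w i)) := by
  calc (2 * √(a * b)) ^ (Fintype.card ι - 1) = ∏ _i ∈ Finset.univ.erase j, 2 * √(a * b) := by
        rw [Finset.prod_const, Finset.card_erase_of_mem (Finset.mem_univ j), Finset.card_univ]
    _ ≤ _ := Finset.prod_le_prod (fun _ _ ↦ by positivity)
        (fun i _ ↦ two_sqrt_mul_le_mul_exp_neg_add_mul_exp ha hb (w i))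

theorem exp_half_log_div {a b : ℝ} (ha : 0 < a) (hb : 0 < b) :
    Real.exp (1 / 2 * Real.log (a / b)) = √(a / b) := by
  rw [one_div_mul_eq_div, Real.exp_half, Real.exp_log (div_pos ha hb)]

theorem sqrt_div_mul_exp {a b : ℝ} (ha : 0 < a) (hb : 0 < b) (v : ℝ) :
    √(b / a) * Real.exp v = Real.exp (v - 1 / 2 * Real.log (a / b)) := by
  rw [Real.exp_sub, exp_half_log_div ha hb, ← inv_div, Real.sqrt_inv, inv_mul_eq_div]

theorem exp_sub_half_log_div_mul {a b : ℝ} (ha : 0 < a) (hb : 0 < b) (v : ℝ) :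
    Real.exp (v - 1 / 2 * Real.log (a / b)) * (a * Real.exp (-v) - b * Real.exp v) =
      √(a * b) * (1 - Real.exp (v - 1 / 2 * Real.log (a / b)) ^ 2) := by
  have hsr : √(a * b) * √(a / b) = a := by
    rw [← Real.sqrt_mul (mul_pos ha hb).le, show a * b * (a / b) = a * a by field_simp,
      Real.sqrt_mul_self ha.le]
  have hbr : b * √(a / b) = √(a * b) := by
    rw [show a * b = b * b * (a / b) by field_simp, Real.sqrt_mul (mul_self_nonneg b),
      Real.sqrt_mul_self hb.le]
  rw [Real.exp_sub, exp_half_log_div ha hb, Real.exp_neg]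
  field_simp
  linear_combination -√(a / b) * hsr - Real.exp v ^ 2 * hbr

theorem two_pow_mul_rpow_div_two {x : ℝ} (hx : 0 ≤ x) {D : ℕ} (hD : 0 < D) :
    2 ^ (D - 1) * x ^ ((D : ℝ) / 2) = √x * (2 * √x) ^ (D - 1) := by
  obtain ⟨n, rfl⟩ := Nat.exists_eq_add_of_lt hD
  rw [Real.rpow_div_two_eq_sqrt _ hx, Real.rpow_natCast, mul_pow]
  simp only [zero_add, add_tsub_cancel_right]
  ring

theorem HasDerivWithinAt.exp_sub_half_log_div {f : ℝ → ℝ} {E P a b x : ℝ} {S : Set ℝ}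
    (ha : 0 < a) (hb : 0 < b)
    (hf : HasDerivWithinAt f (E * (a * Real.exp (-f x) - b * Real.exp (f x)) * P) S x) :
    HasDerivWithinAt (fun τ ↦ Real.exp (f τ - 1 / 2 * Real.log (a / b)))
      (E * √(a * b) * P * (1 - Real.exp (f x - 1 / 2 * Real.log (a / b)) ^ 2)) S x :=
  (hf.sub_const _).exp.congr_deriv <| by
    linear_combination E * P * exp_sub_half_log_div_mul ha hb (f x)

theorem strictMonoOn_of_hasDerivWithinAt_exp_neg_mul {u P : ℝ → ℝ} {a : ℝ}
    (hu : ∀ t ∈ Ici a, HasDerivWithinAt u (Real.exp (-u t) * P t) (Ici a) t)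
    (hP : ∀ t, 0 < P t) : StrictMonoOn u (Ici a) :=
  strictMonoOn_of_hasDerivWithinAt_pos (convex_Ici a)
    (fun t ht ↦ (hu t ht).continuousWithinAt)
    (fun t ht ↦ (hu t (interior_subset ht)).mono interior_subset)
    (fun t _ ↦ mul_pos (Real.exp_pos _) (hP t))

theorem stmt_14_general
    (D : ℕ) (hD : 0 < D) (p : ℝ) (hp : 1 / 2 < p) (hp1 : p < 1)
    (u : ℝ → ℝ) (v : Fin D → ℝ → ℝ)
    -- gradient-flow system on `[0, ∞)`
    (hu : ∀ t ∈ Set.Ici (0 : ℝ),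
      HasDerivWithinAt u
        (Real.exp (-u t) * ∏ i, (p * Real.exp (-v i t) + (1 - p) * Real.exp (v i t)))
        (Set.Ici 0) t)
    (hv : ∀ (j : Fin D), ∀ t ∈ Set.Ici (0 : ℝ),
      HasDerivWithinAt (v j)
        (Real.exp (-u t) * (p * Real.exp (-v j t) - (1 - p) * Real.exp (v j t)) *
          ∏ i ∈ Finset.univ.erase j,
            (p * Real.exp (-v i t) + (1 - p) * Real.exp (v i t)))
        (Set.Ici 0) t)
    (hv0 : ∀ j, 0 < v j 0 ∧ v j 0 < (1 / 2) * Real.log (p / (1 - p)))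
    (T : ℝ) :
    ∀ t : ℝ, 0 < t → t < T →
      (1 / 2) * Real.log (p / (1 - p)) +
        Real.log (Real.tanh (artanh (Real.sqrt ((1 - p) / p) * Real.exp (v ⟨0, hD⟩ 0)) +
          Real.exp (-u T) * 2 ^ (D - 1) * (p * (1 - p)) ^ ((D : ℝ) / 2) * t))
      < v ⟨0, hD⟩ t := by
  intro t ht htT
  have hp0 : 0 < p := by linarith
  have hq0 : 0 < 1 - p := by linarith
  set j₀ : Fin D := ⟨0, hD⟩
  set c := 1 / 2 * Real.log (p / (1 - p))
  set s := √(p * (1 - p))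
  set z : ℝ → ℝ := fun τ ↦ Real.exp (v j₀ τ - c)
  set B : ℝ → ℝ := fun τ ↦ Real.exp (-u τ) * s *
    ∏ i ∈ Finset.univ.erase j₀, (p * Real.exp (-v i τ) + (1 - p) * Real.exp (v i τ))
  have hz : ∀ τ ∈ Ici 0, HasDerivWithinAt z (B τ * (1 - z τ ^ 2)) (Ici 0) τ := fun τ hτ ↦
    (hv j₀ τ hτ).exp_sub_half_log_div hp0 hq0
  have hu_cont : ContinuousOn u (Ici 0) := fun τ hτ ↦ (hu τ hτ).continuousWithinAt
  have hv_cont : ∀ i, ContinuousOn (v i) (Ici 0) := fun i τ hτ ↦ (hv i τ hτ).continuousWithinAt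
  have hB : ContinuousOn B (Ici 0) := by fun_prop
  have hu_mono : StrictMonoOn u (Ici 0) :=
    strictMonoOn_of_hasDerivWithinAt_exp_neg_mul hu fun τ ↦ Finset.prod_pos fun i _ ↦ by positivity
  set m := Real.exp (-u t) * s * (2 * s) ^ (D - 1)
  have hm : ∀ τ ∈ Icc 0 t, m ≤ B τ := by
    intro τ hτ
    have hP := pow_le_prod_erase_mul_exp_neg_add_mul_exp hp0.le hq0.le (fun i ↦ v i τ) j₀
    rw [Fintype.card_fin] at hP
    have hu_le : u τ ≤ u t := hu_mono.monotoneOn hτ.1 ht.le hτ.2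
    dsimp only [m, B]
    gcongr
  have hz0 : z 0 ∈ Ioo 0 1 :=
    ⟨Real.exp_pos _, Real.exp_lt_one_iff.2 (sub_neg.2 (hv0 j₀).2)⟩
  have hK : Real.exp (-u T) * 2 ^ (D - 1) * (p * (1 - p)) ^ ((D : ℝ) / 2) < m := by
    rw [mul_assoc, two_pow_mul_rpow_div_two (mul_pos hp0 hq0).le hD, ← mul_assoc]
    have hu_lt : u t < u T := hu_mono ht.le (ht.trans htT).le htT
    dsimp only [m]
    gcongr
  have htanh := tanh_artanh_add_mul_lt_of_hasDerivWithinAt hB hz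
    (abs_lt.2 ⟨by linarith [hz0.1], hz0.2⟩) ht hm hK
  have hartanh_pos := artanh_pos hz0
  rw [sub_zero] at htanh
  have hlog := Real.log_lt_log (Real.tanh_pos (by positivity)) htanh
  rw [Real.log_exp] at hlog
  rw [sqrt_div_mul_exp hp0 hq0]
  linarith

/-- **Proposition 1, lower bound on the first spurious weight.** -/
theorem stmt_14
    (D : ℕ) (hD : 0 < D) (p : ℝ) (hp : 1 / 2 < p) (hp1 : p < 1)
    (u : ℝ → ℝ) (v : Fin D → ℝ → ℝ)
    -- gradient-flow system on `[0, ∞)`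
    (hu : ∀ t ∈ Set.Ici (0 : ℝ),
      HasDerivWithinAt u
        (Real.exp (-u t) * ∏ i, (p * Real.exp (-v i t) + (1 - p) * Real.exp (v i t)))
        (Set.Ici 0) t)
    (hv : ∀ (j : Fin D), ∀ t ∈ Set.Ici (0 : ℝ),
      HasDerivWithinAt (v j)
        (Real.exp (-u t) * (p * Real.exp (-v j t) - (1 - p) * Real.exp (v j t)) *
          ∏ i ∈ Finset.univ.erase j,
            (p * Real.exp (-v i t) + (1 - p) * Real.exp (v i t)))
        (Set.Ici 0) t)
    (hv0 : ∀ j, 0 < v j 0 ∧ v j 0 < (1 / 2) * Real.log (p / (1 - p)))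
    (T : ℝ) (hT : 0 < T) :
    ∀ t : ℝ, 0 < t → t < T →
      (1 / 2) * Real.log (p / (1 - p)) +
        Real.log (Real.tanh (artanh (Real.sqrt ((1 - p) / p) * Real.exp (v ⟨0, hD⟩ 0)) +
          Real.exp (-u T) * 2 ^ (D - 1) * (p * (1 - p)) ^ ((D : ℝ) / 2) * t))
      < v ⟨0, hD⟩ t :=
  stmt_14_general D hD p hp hp1 u v hu hv hv0 T
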